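/- Let S be a distributive subalgebra of RCC5 and let R, S₁, S₂ be three relations in S. Then R ∩ S₁ ∩ S₂ = ∅ if and only if R ∩ S₁ = ∅, or R ∩ S₂ = ∅, or S₁ ∩ S₂ = ∅. -/

import Mathlib

/-- A *region* is a nonempty regular closed subset of the Euclidean plane `ℝ × ℝ`. -/
def Region : Type :=
  {x : Set (ℝ × ℝ) // x.Nonempty ∧ x = closure (interior x)}

namespace Region

/-- Part-of: `x P y` iff `x ⊆ y`. -/
def P (x y : Region) : Prop := x.1 ⊆ y.1

/-- Overlap: `x O y` iff some region is a common part of `x` and `y`. -/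
def O (x y : Region) : Prop := ∃ z : Region, z.1 ⊆ x.1 ∧ z.1 ⊆ y.1

/-- Connection: `x C y` iff `x ∩ y ≠ ∅`. -/
def C (x y : Region) : Prop := (x.1 ∩ y.1).Nonempty

end Region

/-- The five basic RCC5 relations. -/
inductive RCC5Basic : Type
  | DR | PO | PP | PPi | EQ
deriving DecidableEq

namespace RCC5Basic

/-- Interpretation of the basic RCC5 relations on regions. -/
def interp : RCC5Basic → Region → Region → Prop
  | DR, x, y => ¬ Region.O x y
  | PO, x, y => Region.O x y ∧ ¬ x.1 ⊆ y.1 ∧ ¬ y.1 ⊆ x.1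
  | PP, x, y => x.1 ⊆ y.1 ∧ x ≠ y
  | PPi, x, y => y.1 ⊆ x.1 ∧ x ≠ y
  | EQ, x, y => x = y

/-- Converse of a basic RCC5 relation. -/
def conv : RCC5Basic → RCC5Basic
  | DR => DR | PO => PO | PP => PPi | PPi => PP | EQ => EQ

end RCC5Basic

/-- An RCC5 relation is a union of basic relations, identified with a subset of `B₅`. -/
abbrev RCC5Rel : Type := Set RCC5Basic

namespace RCC5Rel

/-- A pair of regions is an instance of an RCC5 relation iff it is an instance of one of
its basic relations. -/
def interp (R : RCC5Rel) (x y : Region) : Prop := ∃ b ∈ R, RCC5Basic.interp b x y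

/-- Converse of an RCC5 relation. -/
def conv (R : RCC5Rel) : RCC5Rel := {b | RCC5Basic.conv b ∈ R}

/-- Weak composition: `γ ∈ R ⋄ S` iff `γ` intersects the relational composition `R ∘ S`. -/
def comp (R S : RCC5Rel) : RCC5Rel :=
  {γ | ∃ x z : Region, RCC5Basic.interp γ x z ∧
        ∃ y : Region, RCC5Rel.interp R x y ∧ RCC5Rel.interp S y z}

lemma conv_univ : RCC5Rel.conv Set.univ = Set.univ := by
  ext b; simp [RCC5Rel.conv]

end RCC5Rel

/-- A distributive subalgebra of RCC5: contains all basic relations, is closed under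
converse, weak composition and (nonempty) intersection, and weak composition distributes
over nonempty intersections. -/
def IsDistributiveSubalgebra (𝒮 : Set RCC5Rel) : Prop :=
  (∀ b : RCC5Basic, ({b} : RCC5Rel) ∈ 𝒮) ∧
  (∀ R ∈ 𝒮, RCC5Rel.conv R ∈ 𝒮) ∧
  (∀ R ∈ 𝒮, ∀ S ∈ 𝒮, RCC5Rel.comp R S ∈ 𝒮) ∧
  (∀ R ∈ 𝒮, ∀ S ∈ 𝒮, (R ∩ S).Nonempty → R ∩ S ∈ 𝒮) ∧
  (∀ R ∈ 𝒮, ∀ T₁ ∈ 𝒮, ∀ T₂ ∈ 𝒮, (T₁ ∩ T₂).Nonempty →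
    RCC5Rel.comp R (T₁ ∩ T₂) = RCC5Rel.comp R T₁ ∩ RCC5Rel.comp R T₂ ∧
    RCC5Rel.comp (T₁ ∩ T₂) R = RCC5Rel.comp T₁ R ∩ RCC5Rel.comp T₂ R)


section HellyAux

open Metric

/-- Closed balls of positive radius are regions. -/
noncomputable def rball (c : ℝ × ℝ) (r : ℝ) (hr : 0 < r) : Region :=
  ⟨Metric.closedBall c r, Metric.nonempty_closedBall.2 hr.le, by
    rw [interior_closedBall c hr.ne', closure_ball c hr.ne']⟩

lemma rball_val (c : ℝ × ℝ) (r : ℝ) (hr : 0 < r) :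
    (rball c r hr).1 = Metric.closedBall c r := rfl

lemma O_of_subset {x y : Region} (h : x.1 ⊆ y.1) : Region.O x y := ⟨x, subset_rfl, h⟩

lemma O_symm {x y : Region} (h : Region.O x y) : Region.O y x := by
  obtain ⟨z, h1, h2⟩ := h; exact ⟨z, h2, h1⟩

/-- Every basic RCC5 relation is realizable. -/
lemma basic_realizable : ∀ b : RCC5Basic, ∃ x y : Region, b.interp x y := by
  intro b
  have h1 : (0:ℝ) < 1 := one_pos
  have h2 : (0:ℝ) < 2 := two_pos
  have h4 : (0:ℝ) < 1/4 := by norm_num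
  cases b with
  | EQ => exact ⟨rball 0 1 h1, rball 0 1 h1, rfl⟩
  | DR =>
      refine ⟨rball (0,0) 1 h1, rball (10,0) 1 h1, ?_⟩
      rintro ⟨z, hzx, hzy⟩
      obtain ⟨p, hp⟩ := z.2.1
      have hx := hzx hp
      have hy := hzy hp
      rw [rball_val, Metric.mem_closedBall] at hx hy
      have : dist ((0:ℝ),(0:ℝ)) ((10:ℝ),(0:ℝ)) ≤ 2 := by
        calc dist ((0:ℝ),(0:ℝ)) ((10:ℝ),(0:ℝ)) ≤ dist ((0:ℝ),(0:ℝ)) p + dist p ((10:ℝ),(0:ℝ)) :=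
              dist_triangle _ _ _
          _ ≤ 1 + 1 := add_le_add (dist_comm p ((0:ℝ),(0:ℝ)) ▸ hx) hy
          _ = 2 := by norm_num
      rw [Prod.dist_eq] at this
      simp only [Real.dist_eq] at this
      norm_num at this
  | PP =>
      refine ⟨rball (0,0) 1 h1, rball (0,0) 2 h2, ?_, ?_⟩
      · exact Metric.closedBall_subset_closedBall (by norm_num)
      · intro heq
        have : ((2:ℝ),(0:ℝ)) ∈ (rball ((0:ℝ),(0:ℝ)) 1 h1).1 := by
          rw [heq]
          rw [rball_val, Metric.mem_closedBall, Prod.dist_eq]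
          simp only [Real.dist_eq]
          norm_num
        rw [rball_val, Metric.mem_closedBall, Prod.dist_eq] at this
        simp only [Real.dist_eq] at this
        norm_num at this
  | PPi =>
      refine ⟨rball (0,0) 2 h2, rball (0,0) 1 h1, ?_, ?_⟩
      · exact Metric.closedBall_subset_closedBall (by norm_num)
      · intro heq
        have : ((2:ℝ),(0:ℝ)) ∈ (rball ((0:ℝ),(0:ℝ)) 1 h1).1 := by
          rw [← heq]
          rw [rball_val, Metric.mem_closedBall, Prod.dist_eq]
          simp only [Real.dist_eq]
          norm_num
        rw [rball_val, Metric.mem_closedBall, Prod.dist_eq] at this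
        simp only [Real.dist_eq] at this
        norm_num at this
  | PO =>
      refine ⟨rball (0,0) 1 h1, rball (1,0) 1 h1, ⟨rball (1/2,0) (1/4) h4, ?_, ?_⟩, ?_, ?_⟩
      · rw [rball_val, rball_val]
        apply Metric.closedBall_subset_closedBall'
        rw [Prod.dist_eq]
        simp only [Real.dist_eq, sub_self, abs_zero]
        first
          | rw [show |(1:ℝ)/2 - 0| = 1/2 by rw [abs_eq (by norm_num)]; norm_num]
          | rw [show |(1:ℝ)/2 - 1| = 1/2 by rw [abs_eq (by norm_num)]; norm_num]
        norm_num [max_def]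
      · rw [rball_val, rball_val]
        apply Metric.closedBall_subset_closedBall'
        rw [Prod.dist_eq]
        simp only [Real.dist_eq, sub_self, abs_zero]
        first
          | rw [show |(1:ℝ)/2 - 0| = 1/2 by rw [abs_eq (by norm_num)]; norm_num]
          | rw [show |(1:ℝ)/2 - 1| = 1/2 by rw [abs_eq (by norm_num)]; norm_num]
        norm_num [max_def]
      · intro hsub
        have : ((-1:ℝ),(0:ℝ)) ∈ (rball ((1:ℝ),(0:ℝ)) 1 h1).1 := by
          apply hsub
          rw [rball_val, Metric.mem_closedBall, Prod.dist_eq]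
          simp only [Real.dist_eq]; norm_num
        rw [rball_val, Metric.mem_closedBall, Prod.dist_eq] at this
        simp only [Real.dist_eq] at this
        norm_num at this
      · intro hsub
        have : ((2:ℝ),(0:ℝ)) ∈ (rball ((0:ℝ),(0:ℝ)) 1 h1).1 := by
          apply hsub
          rw [rball_val, Metric.mem_closedBall, Prod.dist_eq]
          simp only [Real.dist_eq]; norm_num
        rw [rball_val, Metric.mem_closedBall, Prod.dist_eq] at this
        simp only [Real.dist_eq] at this
        norm_num at this

/-- The basic RCC5 relations are pairwise disjoint as relations on regions. -/
lemma basic_disjoint {b b' : RCC5Basic} {x y : Region}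
    (h : b.interp x y) (h' : b'.interp x y) : b = b' := by
  have heq_of : x.1 ⊆ y.1 → y.1 ⊆ x.1 → x = y := fun hxy hyx =>
    Subtype.ext (subset_antisymm hxy hyx)
  cases b <;> cases b' <;>
    simp only [RCC5Basic.interp] at h h' <;>
    first
      | rfl
      | (exfalso; first
          | exact h (O_of_subset h'.1)
          | exact h (O_symm (O_of_subset h'.1))
          | exact h (O_of_subset (le_of_eq (congrArg Subtype.val h')))
          | exact h' (O_of_subset h.1)
          | exact h' (O_symm (O_of_subset h.1))
          | exact h' (O_of_subset (le_of_eq (congrArg Subtype.val h)))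
          | exact h.2 (heq_of h.1 h'.1)
          | exact h'.2 (heq_of h'.1 h.1)
          | exact h.2.1 h'.1
          | exact h'.2.1 h.1
          | exact h.2 h'
          | exact h'.2 h
          | exact h.2.1 (le_of_eq (congrArg Subtype.val h'))
          | exact h'.2.1 (le_of_eq (congrArg Subtype.val h))
          | exact h.2.2 (le_of_eq (congrArg Subtype.val h'.symm))
          | exact h'.2.2 (le_of_eq (congrArg Subtype.val h.symm))
          | exact h.2.2 h'.1
          | exact h'.2.2 h.1
          | exact h h'.1
          | exact h' h.1)

lemma conv_conv (b : RCC5Basic) : b.conv.conv = b := by cases b <;> rfl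

lemma interp_conv {b : RCC5Basic} {x y : Region} (h : b.interp x y) :
    b.conv.interp y x := by
  cases b with
  | DR => exact fun hO => h (O_symm hO)
  | PO => exact ⟨O_symm h.1, h.2.2, h.2.1⟩
  | PP => exact ⟨h.1, h.2.symm⟩
  | PPi => exact ⟨h.1, h.2.symm⟩
  | EQ => exact h.symm

/-- The key lemma: `EQ ∈ R ⋄ S⁻¹` iff `R ∩ S` is nonempty. -/
lemma eq_mem_comp_conv_iff (R S : RCC5Rel) :
    RCC5Basic.EQ ∈ RCC5Rel.comp R (RCC5Rel.conv S) ↔ (R ∩ S).Nonempty := by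
  constructor
  · rintro ⟨x, z, hxz, y, ⟨b, hbR, hbxy⟩, ⟨b', hb'S, hb'yz⟩⟩
    have hz : x = z := hxz
    subst hz
    have hb'conv : b'.conv.interp x y := interp_conv hb'yz
    have : b = b'.conv := basic_disjoint hbxy hb'conv
    exact ⟨b, hbR, this ▸ hb'S⟩
  · rintro ⟨b, hbR, hbS⟩
    obtain ⟨x, y, hxy⟩ := basic_realizable b
    refine ⟨x, x, rfl, y, ⟨b, hbR, hxy⟩, ⟨b.conv, ?_, interp_conv hxy⟩⟩
    show b.conv.conv ∈ S
    rw [conv_conv]; exact hbS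

lemma conv_inter (S₁ S₂ : RCC5Rel) :
    RCC5Rel.conv (S₁ ∩ S₂) = RCC5Rel.conv S₁ ∩ RCC5Rel.conv S₂ := rfl

end HellyAux

/-- In a distributive subalgebra of RCC5, a triple intersection is empty iff one of the
pairwise intersections is empty. -/
theorem distributive_triple_intersection (𝒮 : Set RCC5Rel)
    (h𝒮 : IsDistributiveSubalgebra 𝒮) (R S₁ S₂ : RCC5Rel)
    (hR : R ∈ 𝒮) (h1 : S₁ ∈ 𝒮) (h2 : S₂ ∈ 𝒮) :
    R ∩ S₁ ∩ S₂ = ∅ ↔ (R ∩ S₁ = ∅ ∨ R ∩ S₂ = ∅ ∨ S₁ ∩ S₂ = ∅) := by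
  constructor
  · intro htriple
    by_contra hcon
    push_neg at hcon
    obtain ⟨hA, hB, hC⟩ := hcon
    -- converses are in 𝒮
    have h1c : RCC5Rel.conv S₁ ∈ 𝒮 := h𝒮.2.1 S₁ h1
    have h2c : RCC5Rel.conv S₂ ∈ 𝒮 := h𝒮.2.1 S₂ h2
    -- conv S₁ ∩ conv S₂ is nonempty
    obtain ⟨b, hb⟩ := hC
    have hCc2 : (RCC5Rel.conv S₁ ∩ RCC5Rel.conv S₂).Nonempty := by
      obtain ⟨hb1, hb2⟩ := hb
      refine ⟨b.conv, ?_, ?_⟩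
      · show b.conv.conv ∈ S₁; rw [conv_conv]; exact hb1
      · show b.conv.conv ∈ S₂; rw [conv_conv]; exact hb2
    have hdist := (h𝒮.2.2.2.2 R hR (RCC5Rel.conv S₁) h1c (RCC5Rel.conv S₂) h2c hCc2).1
    have hEQ1 : RCC5Basic.EQ ∈ RCC5Rel.comp R (RCC5Rel.conv S₁) :=
      (eq_mem_comp_conv_iff R S₁).2 hA
    have hEQ2 : RCC5Basic.EQ ∈ RCC5Rel.comp R (RCC5Rel.conv S₂) :=
      (eq_mem_comp_conv_iff R S₂).2 hB
    have hEQ : RCC5Basic.EQ ∈ RCC5Rel.comp R (RCC5Rel.conv (S₁ ∩ S₂)) := by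
      rw [conv_inter, hdist]; exact ⟨hEQ1, hEQ2⟩
    have := (eq_mem_comp_conv_iff R (S₁ ∩ S₂)).1 hEQ
    rw [← Set.inter_assoc] at this
    rw [htriple] at this
    exact Set.not_nonempty_empty this
  · intro h
    rw [Set.eq_empty_iff_forall_notMem]
    rintro b ⟨⟨hbR, hb1⟩, hb2⟩
    rcases h with h | h | h <;> rw [Set.eq_empty_iff_forall_notMem] at h
    · exact h b ⟨hbR, hb1⟩
    · exact h b ⟨hbR, hb2⟩
    · exact h b ⟨hb1, hb2⟩
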